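/- Let k = k(n) satisfy k/√n → ∞ and k/n → 0. Define Ψ(x) = (1+x)log(1+x) − x and P_±(n,k) = ∏_{j=0}^{k+1}(1 ± j/n). Then log(P_−(n,k)/P_+(n,k)) = −(k²/n)(1+o(1)) → −∞, and log P_+(n,k) = nΨ(k/n) + o(1); consequently Q_{n,k} := (n/((k+1)(k+2)))·(P_+ − P_−) satisfies Q_{n,k} = (n/((k+1)(k+2)))·exp(nΨ(k/n) + o(1)). -/

import Mathlib

open Filter

/-- `P₊(n,k) = ∏_{j=0}^{k+1} (1 + j/n)`. -/
noncomputable def Pplus (n k : ℕ) : ℝ := ∏ j ∈ Finset.range (k + 2), (1 + (j : ℝ) / n)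

/-- `P₋(n,k) = ∏_{j=0}^{k+1} (1 − j/n)`. -/
noncomputable def Pminus (n k : ℕ) : ℝ := ∏ j ∈ Finset.range (k + 2), (1 - (j : ℝ) / n)

/-- The exact finite-width RNN signal energy `Q_{n,k}` in product form. -/
noncomputable def Q (n k : ℕ) : ℝ :=
  ((n : ℝ) / ((k + 1) * (k + 2))) * (Pplus n k - Pminus n k)

/-- The exponent function `Ψ(x) = (1+x)log(1+x) − x`. -/
noncomputable def Psi (x : ℝ) : ℝ := (1 + x) * Real.log (1 + x) - x

open Real Finset Asymptotics

/-!
Taking logarithms, `log (P₋/P₊) = ∑_{j ≤ k+1} (log (1 - j/n) - log (1 + j/n))`, and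
`log (1 ∓ x) = ∓x + O(x²)` turns this into `-(k+1)(k+2)/n + O(k³/n²)`. As `k = o(n)` the error is
`o(k²/n)`, and as `k → ∞`, `(k+1)(k+2) ∼ k²`; since `√n = o(k)` gives `k²/n → ∞`, also `P₋/P₊ → 0`.
For `P₊`, the summands `log (1 + j/n)` sample the increasing function `log (1 + x/n)`, whose
integral over `[0, m]` is `n Ψ(m/n)`, so `log P₊` lies within `2(k+1)/n` of `n Ψ(k/n)`.
Finally `Q = n/((k+1)(k+2)) · P₊ · (1 - P₋/P₊)`.
-/

theorem integral_log_one_add (b : ℝ) : ∫ x in (0 : ℝ)..b, log (1 + x) = Psi b := by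
  rw [intervalIntegral.integral_comp_add_left (fun x => log x) 1, integral_log]
  simp only [add_zero, log_one, mul_zero, sub_zero, Psi]
  ring

theorem integral_log_one_add_div {c : ℝ} (hc : c ≠ 0) (b : ℝ) :
    ∫ x in (0 : ℝ)..b, log (1 + x / c) = c * Psi (b / c) := by
  rw [intervalIntegral.integral_comp_div (fun x => log (1 + x)) hc, zero_div,
    integral_log_one_add, smul_eq_mul]

theorem abs_log_one_sub_add_le {x : ℝ} (hx : |x| ≤ 1 / 2) : |log (1 - x) + x| ≤ 2 * x ^ 2 := by
  have h := abs_log_sub_add_sum_range_le (hx.trans_lt (by norm_num)) 1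
  simp only [range_one, sum_singleton, zero_add, pow_one, Nat.cast_zero, div_one] at h
  rw [add_comm]
  calc _ ≤ |x| ^ 2 / (1 - |x|) := h
    _ ≤ |x| ^ 2 / (1 / 2) := by gcongr; linarith
    _ = 2 * x ^ 2 := by rw [sq_abs]; ring

theorem abs_log_one_sub_sub_log_one_add_add_le {x : ℝ} (hx : |x| ≤ 1 / 2) :
    |log (1 - x) - log (1 + x) + 2 * x| ≤ 4 * x ^ 2 := by
  have h₁ := abs_log_one_sub_add_le hx
  have h₂ := abs_log_one_sub_add_le (x := -x) (by rwa [abs_neg])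
  rw [sub_neg_eq_add, neg_sq] at h₂
  calc _ = |(log (1 - x) + x) - (log (1 + x) + -x)| := by ring_nf
    _ ≤ _ := (abs_sub _ _).trans (by linarith)

theorem monotoneOn_log_one_add_div {c : ℝ} (hc : 0 < c) :
    MonotoneOn (fun x => log (1 + x / c)) (Set.Ici 0) := fun x hx y _ hxy =>
  log_le_log (by have : 0 ≤ x / c := div_nonneg hx hc.le; linarith) (by gcongr)

theorem sum_log_one_add_div_le_mul_Psi {c : ℝ} (hc : 0 < c) (m : ℕ) :
    ∑ j ∈ range m, log (1 + j / c) ≤ c * Psi (m / c) := by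
  have h := ((monotoneOn_log_one_add_div hc).mono Set.Icc_subset_Ici_self).sum_le_integral
    (x₀ := 0) (a := m)
  simpa [integral_log_one_add_div hc.ne'] using h

theorem mul_Psi_le_sum_log_one_add_div {c : ℝ} (hc : 0 < c) (m : ℕ) :
    c * Psi (m / c) ≤ ∑ j ∈ range (m + 1), log (1 + j / c) := by
  have h := ((monotoneOn_log_one_add_div hc).mono Set.Icc_subset_Ici_self).integral_le_sum
    (x₀ := 0) (a := m)
  rw [sum_range_succ']
  simpa [integral_log_one_add_div hc.ne'] using h

theorem log_Pplus (n K : ℕ) : log (Pplus n K) = ∑ j ∈ range (K + 2), log (1 + j / n) :=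
  log_prod fun j _ => by positivity

theorem Pplus_pos (n K : ℕ) : 0 < Pplus n K := prod_pos fun j _ => by positivity

theorem div_le_half_of_mem_range {n K j : ℕ} (hn : 2 * (K + 1) ≤ n) (hj : j ∈ range (K + 2)) :
    (j : ℝ) / n ≤ 1 / 2 := by
  have hn' : (0 : ℝ) < n := by norm_cast; omega
  rw [div_le_iff₀ hn']
  have : 2 * j ≤ n := by rw [mem_range] at hj; omega
  have : (2 * j : ℝ) ≤ n := by exact_mod_cast this
  linarith

theorem Pminus_pos {n K : ℕ} (hn : 2 * (K + 1) ≤ n) : 0 < Pminus n K :=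
  prod_pos fun j hj => by linarith [div_le_half_of_mem_range hn hj]

theorem log_Pminus {n K : ℕ} (hn : 2 * (K + 1) ≤ n) :
    log (Pminus n K) = ∑ j ∈ range (K + 2), log (1 - j / n) :=
  log_prod fun j hj => by linarith [div_le_half_of_mem_range hn hj]

theorem sum_range_two_mul_div (n K : ℕ) :
    ∑ j ∈ range (K + 2), 2 * ((j : ℝ) / n) = (K + 1) * (K + 2) / n := by
  have h : ((∑ j ∈ range (K + 2), j : ℕ) : ℝ) * 2 = (K + 2) * (K + 1) := by
    exact_mod_cast sum_range_id_mul_two (K + 2)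
  push_cast at h
  rw [← mul_sum, ← sum_div]
  linear_combination h / n

theorem abs_log_Pminus_div_Pplus_add_le {n K : ℕ} (hn : 2 * (K + 1) ≤ n) :
    |log (Pminus n K / Pplus n K) + (K + 1) * (K + 2) / n| ≤ 4 * (K + 2) * ((K + 1) / n) ^ 2 := by
  rw [log_div (Pminus_pos hn).ne' (Pplus_pos n K).ne', log_Pminus hn, log_Pplus,
    ← sum_range_two_mul_div, ← sum_sub_distrib, ← sum_add_distrib]
  refine (abs_sum_le_sum_abs _ _).trans ?_
  calc _ ≤ ∑ j ∈ range (K + 2), 4 * ((K + 1) / n : ℝ) ^ 2 := by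
        refine sum_le_sum fun j hj => ?_
        have hj0 : (0 : ℝ) ≤ j / n := by positivity
        have hjK : (j : ℝ) / n ≤ (K + 1) / n := by
          gcongr; exact_mod_cast Nat.le_of_lt_succ (mem_range.mp hj)
        refine (abs_log_one_sub_sub_log_one_add_add_le ?_).trans (by gcongr)
        rw [abs_of_nonneg hj0]; exact div_le_half_of_mem_range hn hj
    _ = _ := by rw [sum_const, card_range, nsmul_eq_mul]; push_cast; ring

theorem log_Pplus_sub_mul_Psi_mem {n : ℕ} (hn : 0 < n) (K : ℕ) :
    log (Pplus n K) - n * Psi (K / n) ∈ Set.Icc 0 (2 * ((K + 1 : ℝ) / n)) := by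
  have hn' : (0 : ℝ) < n := Nat.cast_pos.mpr hn
  -- `n Ψ(K/n)` lies between the sums of the first `K` and `K + 1` of the `K + 2` terms of `log P₊`.
  have hlow := mul_Psi_le_sum_log_one_add_div hn' K
  have hup := sum_log_one_add_div_le_mul_Psi hn' K
  have hterm : ∀ j : ℕ, j ≤ K + 1 → 0 ≤ log (1 + j / n) ∧ log (1 + j / n) ≤ (K + 1) / n := by
    intro j hj
    have hj' : (j : ℝ) / n ≤ (K + 1) / n := by gcongr; exact_mod_cast hj
    exact ⟨log_nonneg (by linarith [show (0 : ℝ) ≤ j / n by positivity]),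
      (log_le_sub_one_of_pos (by positivity)).trans (by linarith)⟩
  have hK := hterm K (by omega)
  have hK1 := hterm (K + 1) le_rfl
  rw [log_Pplus, sum_range_succ, sum_range_succ]
  rw [sum_range_succ] at hlow
  push_cast at hK1 ⊢
  constructor <;> linarith [hK.1, hK.2, hK1.1, hK1.2]

theorem Q_div_eq {n K : ℕ} (hn : 2 * (K + 1) ≤ n) :
    Q n K / ((n / ((K + 1) * (K + 2))) * exp (n * Psi (K / n))) =
      exp (log (Pplus n K) - n * Psi (K / n)) * (1 - exp (log (Pminus n K / Pplus n K))) := by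
  have hn' : (n : ℝ) ≠ 0 := by norm_cast; omega
  have hP := Pplus_pos n K
  rw [exp_sub, exp_log hP, exp_log (div_pos (Pminus_pos hn) hP), Q]
  field_simp

theorem tendsto_atTop_of_tendsto_div_sqrt {x : ℕ → ℝ} (h : Tendsto (fun n => x n / √n) atTop atTop) :
    Tendsto x atTop atTop := by
  refine tendsto_atTop_mono' atTop ?_ h
  filter_upwards [eventually_ge_atTop 1, h.eventually_ge_atTop 0] with n hn hx
  have hsqrt : 1 ≤ √(n : ℝ) := one_le_sqrt.mpr (by exact_mod_cast hn)
  calc x n / √n ≤ x n / √n * √n := le_mul_of_one_le_right hx hsqrt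
    _ = x n := div_mul_cancel₀ _ (by positivity)

theorem tendsto_sq_div_of_tendsto_div_sqrt {x : ℕ → ℝ} (h : Tendsto (fun n => x n / √n) atTop atTop) :
    Tendsto (fun n => x n ^ 2 / n) atTop atTop := by
  refine (h.atTop_mul_atTop₀ h).congr fun n => ?_
  rw [div_mul_div_comm, mul_self_sqrt n.cast_nonneg, sq]

section Regime

variable {k : ℕ → ℕ}

theorem eventually_two_mul_add_one_le (h : Tendsto (fun n => (k n : ℝ) / n) atTop (nhds 0)) :
    ∀ᶠ n in atTop, 2 * (k n + 1) ≤ n := by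
  filter_upwards [eventually_ge_atTop 4, h.eventually (ge_mem_nhds (by norm_num : (0 : ℝ) < 1 / 4))]
    with n hn hk
  have hn' : (4 : ℝ) ≤ n := by exact_mod_cast hn
  rw [div_le_iff₀ (by positivity)] at hk
  have : (2 * (k n + 1) : ℝ) ≤ n := by linarith
  exact_mod_cast this

theorem isEquivalent_log_Pminus_div_Pplus
    (h1 : Tendsto (fun n => (k n : ℝ) / √n) atTop atTop)
    (h2 : Tendsto (fun n => (k n : ℝ) / n) atTop (nhds 0)) :
    (fun n => log (Pminus n (k n) / Pplus n (k n))) ~[atTop] fun n => -(k n : ℝ) ^ 2 / n := by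
  have hk := tendsto_atTop_of_tendsto_div_sqrt h1
  have hev : ∀ᶠ n in atTop, 1 ≤ (k n : ℝ) ∧ 2 * (k n + 1) ≤ n :=
    (hk.eventually_ge_atTop 1).and (eventually_two_mul_add_one_le h2)
  have hleading : (fun n => -((k n + 1) * (k n + 2) : ℝ) / n) ~[atTop]
      fun n => -(k n : ℝ) ^ 2 / n := by
    have hnorm : Tendsto (norm ∘ fun n => (k n : ℝ)) atTop atTop :=
      tendsto_norm_atTop_atTop.comp hk
    have hsucc := IsEquivalent.refl.add_const_of_norm_tendsto_atTop (c := 1) hnorm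
    have hsucc₂ := IsEquivalent.refl.add_const_of_norm_tendsto_atTop (c := 2) hnorm
    simpa only [neg_div, sq, Pi.mul_apply, Pi.div_apply] using
      ((hsucc.mul hsucc₂).div (IsEquivalent.refl (u := fun n : ℕ => (n : ℝ)))).neg
  have herr : (fun n => log (Pminus n (k n) / Pplus n (k n)) - -((k n + 1) * (k n + 2) : ℝ) / n)
      =O[atTop] fun n => ((k n : ℝ) / n) * (-(k n : ℝ) ^ 2 / n) := by
    refine IsBigO.of_bound 48 ?_
    filter_upwards [hev] with n ⟨hk1, hn⟩
    have hbound := abs_log_Pminus_div_Pplus_add_le hn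
    have hn' : (0 : ℝ) < n := by norm_cast; omega
    rw [Real.norm_eq_abs, Real.norm_eq_abs, abs_mul, neg_div, neg_div, abs_neg, sub_neg_eq_add,
      abs_of_nonneg (by positivity : (0 : ℝ) ≤ k n / n),
      abs_of_nonneg (by positivity : (0 : ℝ) ≤ k n ^ 2 / n)]
    calc _ ≤ 4 * (k n + 2) * ((k n + 1) / n : ℝ) ^ 2 := hbound
      _ ≤ 4 * (3 * k n) * ((2 * k n) / n : ℝ) ^ 2 := by gcongr <;> linarith
      _ = 48 * (k n / n * (k n ^ 2 / n)) := by ring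
  have hsmall : (fun n => ((k n : ℝ) / n) * (-(k n : ℝ) ^ 2 / n)) =o[atTop]
      fun n => -(k n : ℝ) ^ 2 / n := by
    simpa using (isLittleO_one_iff ℝ |>.mpr h2).mul_isBigO (isBigO_refl _ _)
  refine ((herr.trans_isLittleO hsmall).add hleading.isLittleO).congr_left fun n => ?_
  simp only [Pi.sub_apply]
  ring

theorem tendsto_log_Pplus_sub_mul_Psi (h : Tendsto (fun n => (k n : ℝ) / n) atTop (nhds 0)) :
    Tendsto (fun n => log (Pplus n (k n)) - n * Psi (k n / n)) atTop (nhds 0) := by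
  have hbound : Tendsto (fun n => 2 * ((k n + 1 : ℝ) / n)) atTop (nhds 0) := by
    simpa only [add_div, one_div, add_zero, mul_zero] using
      (h.add tendsto_inv_atTop_nhds_zero_nat).const_mul 2
  refine tendsto_of_tendsto_of_tendsto_of_le_of_le' tendsto_const_nhds hbound ?_ ?_ <;>
    filter_upwards [eventually_gt_atTop 0] with n hn
  exacts [(log_Pplus_sub_mul_Psi_mem hn _).1, (log_Pplus_sub_mul_Psi_mem hn _).2]

end Regime

/-- In the supercritical sublinear regime `√n ≪ k ≪ n`:
`log(P₋/P₊) = −(k²/n)(1+o(1)) → −∞`, `log P₊ = nΨ(k/n) + o(1)`, and consequently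
`Q_{n,k} = (n/((k+1)(k+2)))·exp(nΨ(k/n) + o(1))`. -/
theorem Q_supercritical_regime (k : ℕ → ℕ)
    (h1 : Tendsto (fun n => (k n : ℝ) / Real.sqrt n) atTop atTop)
    (h2 : Tendsto (fun n => (k n : ℝ) / n) atTop (nhds 0)) :
    Tendsto (fun n => Real.log (Pminus n (k n) / Pplus n (k n)) / (-(k n : ℝ) ^ 2 / n))
        atTop (nhds 1) ∧
    Tendsto (fun n => Real.log (Pminus n (k n) / Pplus n (k n))) atTop atBot ∧
    Tendsto (fun n => Real.log (Pplus n (k n)) - n * Psi ((k n : ℝ) / n)) atTop (nhds 0) ∧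
    Tendsto (fun n => Q n (k n) /
        (((n : ℝ) / ((k n + 1) * (k n + 2))) * Real.exp (n * Psi ((k n : ℝ) / n))))
      atTop (nhds 1) := by
  have hequiv := isEquivalent_log_Pminus_div_Pplus h1 h2
  have hbot : Tendsto (fun n => -(k n : ℝ) ^ 2 / n) atTop atBot := by
    simpa only [neg_div, Function.comp_def] using
      tendsto_neg_atTop_atBot.comp (tendsto_sq_div_of_tendsto_div_sqrt h1)
  have hlogPminus := hequiv.symm.tendsto_atBot hbot
  have hlogPplus := tendsto_log_Pplus_sub_mul_Psi h2
  refine ⟨(isEquivalent_iff_tendsto_one (hbot.eventually_ne_atBot 0)).mp hequiv, hlogPminus,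
    hlogPplus, ?_⟩
  have hlim := ((continuous_exp.tendsto 0).comp hlogPplus).mul
    ((tendsto_const_nhds (x := (1 : ℝ))).sub (tendsto_exp_atBot.comp hlogPminus))
  rw [exp_zero, sub_zero, mul_one] at hlim
  refine hlim.congr' ?_
  filter_upwards [eventually_two_mul_add_one_le h2] with n hn
  exact (Q_div_eq hn).symm
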